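/- Let k ≥ 1 be an integer and α, α₁, α₂ ∈ ℝ with α ≠ 0, α·α₁ < 0 and α·α₂ > 0. For j ∈ ℤ and t ∈ ℝ define c_j(t) = ∫₀^∞ s^j e^{jαt} exp((α₁/(kα)) s^k e^{kαt} − (α₂/(kα)) s^{−k} e^{−kαt}) ds. Then each integral converges, each c_j is differentiable on ℝ, and the moments simultaneously satisfy c_j'(t) = α j c_j(t) + α₁ c_{j+k}(t) + α₂ c_{j−k}(t) and c_j'(t) = −α c_j(t) for all j ∈ ℤ and all t ∈ ℝ. -/

import Mathlib

/-!
The substitution `u = e^{αt} s` gives `c_j(t) = e^{-αt} I_j`, where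
`I_j = ∫₀^∞ u^j exp(A u^k - B u^{-k}) du` with `A = α₁/(kα) < 0 < B = α₂/(kα)`; hence `c_j' = -α c_j`.
The function `u^{j+1} exp(A u^k - B u^{-k})` vanishes at `0⁺` and at `∞` and has derivative
`(j+1) f_j + kA f_{j+k} + kB f_{j-k}` (with `f_i` the integrand of `I_i`), so
`(j+1) I_j + kA I_{j+k} + kB I_{j-k} = 0`. Multiplied by `α e^{-αt}`, this identity turns `-α c_j`
into `α j c_j + α₁ c_{j+k} + α₂ c_{j-k}`. The inversion `u ↦ u⁻¹` exchanges `(A, B)` with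
`(-B, -A)`, so the behaviour at `0⁺` follows from the behaviour at `∞`.
-/

open MeasureTheory

/-- The deformed moments associated with generalized Laurent biorthogonal polynomials
(indexed by all integers `j`):
`c_j(t) = ∫₀^∞ s^j e^{jαt} exp((α₁/(kα)) s^k e^{kαt} − (α₂/(kα)) s^{−k} e^{−kαt}) ds`. -/
noncomputable def deformedMomentLaurent (k : ℕ) (α α₁ α₂ : ℝ) (j : ℤ) (t : ℝ) : ℝ :=
  ∫ s in Set.Ioi (0 : ℝ),
    s ^ j * Real.exp ((j : ℝ) * α * t) *
      Real.exp (α₁ / (k * α) * s ^ k * Real.exp (k * α * t)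
        - α₂ / (k * α) * s ^ (-(k : ℤ)) * Real.exp (-(k : ℝ) * α * t))

open Set Filter Topology Asymptotics

theorem integral_Ioi_of_hasDerivAt_of_tendsto_nhdsGT {E : Type*} [NormedAddCommGroup E]
    [NormedSpace ℝ E] [CompleteSpace E] {f f' : ℝ → E} {a : ℝ} {l m : E}
    (hderiv : ∀ x ∈ Ioi a, HasDerivAt f (f' x) x) (hf' : IntegrableOn f' (Ioi a))
    (hleft : Tendsto f (𝓝[>] a) (𝓝 l)) (htop : Tendsto f atTop (𝓝 m)) :
    ∫ x in Ioi a, f' x = m - l := by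
  -- Redefining `f` at `a` as `l` makes it continuous from the right there.
  have hupdate : ∀ x ∈ Ioi a, Function.update f a l x = f x := fun x hx =>
    Function.update_of_ne (ne_of_gt hx) _ _
  have hcont : ContinuousWithinAt (Function.update f a l) (Ici a) a := by
    rw [← continuousWithinAt_Ioi_iff_Ici, ContinuousWithinAt, Function.update_self]
    exact hleft.congr' (eventually_nhdsWithin_of_forall fun x hx => (hupdate x hx).symm)
  have hderiv' : ∀ x ∈ Ioi a, HasDerivAt (Function.update f a l) (f' x) x := fun x hx =>
    (hderiv x hx).congr_of_eventuallyEq ((eventually_gt_nhds hx).mono hupdate)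
  have htop' : Tendsto (Function.update f a l) atTop (𝓝 m) :=
    htop.congr' ((eventually_gt_atTop a).mono fun x hx => (hupdate x hx).symm)
  rw [integral_Ioi_of_hasDerivAt_of_tendsto hcont hderiv' hf' htop', Function.update_self]

noncomputable def laurentIntegrand (k : ℕ) (A B : ℝ) (j : ℤ) (u : ℝ) : ℝ :=
  u ^ j * Real.exp (A * u ^ k - B * u ^ (-(k : ℤ)))

noncomputable def laurentIntegral (k : ℕ) (A B : ℝ) (j : ℤ) : ℝ :=
  ∫ u in Ioi (0 : ℝ), laurentIntegrand k A B j u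

theorem laurentIntegrand_inv (k : ℕ) (A B : ℝ) (j : ℤ) (u : ℝ) :
    laurentIntegrand k A B j u⁻¹ = laurentIntegrand k (-B) (-A) (-j) u := by
  simp only [laurentIntegrand, inv_zpow', zpow_neg, inv_inv, zpow_natCast, inv_pow]
  congr 2
  ring

theorem continuousOn_laurentIntegrand (k : ℕ) (A B : ℝ) (j : ℤ) :
    ContinuousOn (laurentIntegrand k A B j) (Ioi 0) := by
  unfold laurentIntegrand
  fun_prop (disch := exact fun x hx => Or.inl (ne_of_gt hx))

theorem hasDerivAt_laurentIntegrand (k : ℕ) (A B : ℝ) (j : ℤ) {x : ℝ} (hx : x ≠ 0) :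
    HasDerivAt (laurentIntegrand k A B (j + 1))
      ((j + 1) * laurentIntegrand k A B j x + k * A * laurentIntegrand k A B (j + k) x
        + k * B * laurentIntegrand k A B (j - k) x) x := by
  have hexp := (((hasDerivAt_zpow k x (.inl hx)).const_mul A).fun_sub
    ((hasDerivAt_zpow (-k) x (.inl hx)).const_mul B)).exp
  refine ((hasDerivAt_zpow (j + 1) x (.inl hx)).fun_mul hexp).congr_deriv ?_
  simp only [laurentIntegrand, zpow_add₀ hx, zpow_sub₀ hx, zpow_neg, zpow_natCast, zpow_one]
  push_cast
  field_simp
  ring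

section

variable {k : ℕ} {A B : ℝ}

theorem tendsto_laurentIntegrand_atTop (hk : k ≠ 0) (hA : A < 0) (j : ℤ) :
    Tendsto (laurentIntegrand k A B j) atTop (𝓝 0) := by
  have hpow : Tendsto (fun u : ℝ => u ^ j * Real.exp (A * u ^ k)) atTop (𝓝 0) := by
    refine ((tendsto_rpow_mul_exp_neg_mul_atTop_nhds_zero (j / k) (-A) (by linarith)).comp
      (tendsto_pow_atTop hk)).congr' ?_
    filter_upwards [eventually_gt_atTop 0] with u hu
    rw [Function.comp_apply, ← Real.rpow_natCast, ← Real.rpow_mul hu.le,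
      mul_div_cancel₀ _ (by exact_mod_cast hk), Real.rpow_intCast, neg_mul, neg_mul, neg_neg]
  have hexp : Tendsto (fun u : ℝ => Real.exp (-(B * u ^ (-(k : ℤ))))) atTop (𝓝 1) := by
    simpa using (((tendsto_zpow_atTop_zero (n := -(k : ℤ)) (by omega)).const_mul B).neg).rexp
  have := hpow.mul hexp
  rw [zero_mul] at this
  refine this.congr fun u => ?_
  rw [laurentIntegrand, sub_eq_add_neg, Real.exp_add, mul_assoc]

theorem tendsto_laurentIntegrand_nhdsGT_zero (hk : k ≠ 0) (hB : 0 < B) (j : ℤ) :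
    Tendsto (laurentIntegrand k A B j) (𝓝[>] 0) (𝓝 0) := by
  have := (tendsto_laurentIntegrand_atTop (B := -A) hk (neg_neg_of_pos hB) (-j)).comp
    tendsto_inv_nhdsGT_zero
  convert this using 1
  funext u
  simp [laurentIntegrand_inv]

theorem laurentIntegrand_isBigO_atTop (hk : k ≠ 0) (hA : A < 0) (j : ℤ) :
    laurentIntegrand k A B j =O[atTop] fun u => u ^ (-2 : ℝ) := by
  have hfactor : (fun u => u ^ (-2 : ℝ) * laurentIntegrand k A B (j + 2) u)
      =ᶠ[atTop] laurentIntegrand k A B j := by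
    filter_upwards [eventually_gt_atTop 0] with u hu
    rw [laurentIntegrand, laurentIntegrand, ← mul_assoc, zpow_add₀ hu.ne', Real.rpow_neg hu.le]
    norm_cast
    field_simp
  exact ((isBigO_refl (fun u : ℝ => u ^ (-2 : ℝ)) atTop).mul
    ((tendsto_laurentIntegrand_atTop hk hA (j + 2)).isBigO_one ℝ)).congr' hfactor
    (Eventually.of_forall fun u => mul_one _)

theorem integrableOn_laurentIntegrand (hk : k ≠ 0) (hA : A < 0) (hB : 0 < B) (j : ℤ) :
    IntegrableOn (laurentIntegrand k A B j) (Ioi 0) := by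
  have hcont := continuousOn_laurentIntegrand k A B j
  rw [integrableOn_Ioi_iff_integrableAtFilter_atTop_nhdsWithin]
  refine ⟨?_, ?_, hcont.locallyIntegrableOn measurableSet_Ioi⟩
  · refine (laurentIntegrand_isBigO_atTop hk hA j).integrableAtFilter
      ⟨Ioi 0, Ioi_mem_atTop 0, hcont.aestronglyMeasurable measurableSet_Ioi⟩
      ⟨Ioi 1, Ioi_mem_atTop 1, integrableOn_Ioi_rpow_of_lt (by norm_num) one_pos⟩
  · exact (tendsto_laurentIntegrand_nhdsGT_zero hk hB j).integrableAtFilter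
      (hcont.stronglyMeasurableAtFilter_nhdsWithin measurableSet_Ioi 0)
      (volume.finiteAt_nhdsWithin 0 _)

theorem laurentIntegral_recurrence (hk : k ≠ 0) (hA : A < 0) (hB : 0 < B) (j : ℤ) :
    (j + 1) * laurentIntegral k A B j + k * A * laurentIntegral k A B (j + k)
      + k * B * laurentIntegral k A B (j - k) = 0 := by
  have hint : ∀ i, IntegrableOn (laurentIntegrand k A B i) (Ioi 0) :=
    integrableOn_laurentIntegrand hk hA hB
  have := integral_Ioi_of_hasDerivAt_of_tendsto_nhdsGT
    (fun x hx => hasDerivAt_laurentIntegrand k A B j (ne_of_gt hx))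
    ((((hint j).const_mul _).fun_add ((hint _).const_mul _)).fun_add ((hint _).const_mul _))
    (tendsto_laurentIntegrand_nhdsGT_zero hk hB (j + 1))
    (tendsto_laurentIntegrand_atTop hk hA (j + 1))
  rwa [integral_add (((hint j).const_mul _).fun_add ((hint _).const_mul _)) ((hint _).const_mul _),
    integral_add ((hint j).const_mul _) ((hint _).const_mul _), integral_const_mul,
    integral_const_mul, integral_const_mul, sub_zero] at this

end

theorem deformedMomentLaurent_integrand_eq (k : ℕ) (α α₁ α₂ : ℝ) (j : ℤ) (t s : ℝ) :
    s ^ j * Real.exp ((j : ℝ) * α * t) *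
        Real.exp (α₁ / (k * α) * s ^ k * Real.exp (k * α * t)
          - α₂ / (k * α) * s ^ (-(k : ℤ)) * Real.exp (-(k : ℝ) * α * t)) =
      laurentIntegrand k (α₁ / (k * α)) (α₂ / (k * α)) j (Real.exp (α * t) * s) := by
  have hzpow : ∀ n : ℤ, Real.exp (α * t) ^ n = Real.exp (n * α * t) := fun n => by
    rw [← Real.rpow_intCast, ← Real.exp_mul, mul_comm, mul_assoc]
  have hnpow : ∀ n : ℕ, Real.exp (α * t) ^ n = Real.exp (n * α * t) := fun n => by
    rw [← Real.exp_nat_mul, mul_assoc]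
  simp only [laurentIntegrand, mul_zpow, mul_pow, hzpow, hnpow]
  push_cast
  ring_nf

theorem deformedMomentLaurent_eq (k : ℕ) (α α₁ α₂ : ℝ) (j : ℤ) (t : ℝ) :
    deformedMomentLaurent k α α₁ α₂ j t =
      Real.exp (-(α * t)) * laurentIntegral k (α₁ / (k * α)) (α₂ / (k * α)) j := by
  simp only [deformedMomentLaurent, deformedMomentLaurent_integrand_eq]
  rw [integral_comp_mul_left_Ioi _ 0 (Real.exp_pos _), mul_zero, smul_eq_mul, Real.exp_neg,
    laurentIntegral]

theorem deformedMomentLaurent_evolution (k : ℕ) (hk : 1 ≤ k)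
    (α α₁ α₂ : ℝ) (hα : α ≠ 0) (hαα₁ : α * α₁ < 0) (hαα₂ : 0 < α * α₂) :
    (∀ (j : ℤ) (t : ℝ), IntegrableOn
      (fun s : ℝ => s ^ j * Real.exp ((j : ℝ) * α * t) *
        Real.exp (α₁ / (k * α) * s ^ k * Real.exp (k * α * t)
          - α₂ / (k * α) * s ^ (-(k : ℤ)) * Real.exp (-(k : ℝ) * α * t)))
      (Set.Ioi (0 : ℝ))) ∧
    (∀ (j : ℤ) (t : ℝ), HasDerivAt (fun u => deformedMomentLaurent k α α₁ α₂ j u)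
      (α * (j : ℝ) * deformedMomentLaurent k α α₁ α₂ j t
        + α₁ * deformedMomentLaurent k α α₁ α₂ (j + k) t
        + α₂ * deformedMomentLaurent k α α₁ α₂ (j - k) t) t) ∧
    (∀ (j : ℤ) (t : ℝ), HasDerivAt (fun u => deformedMomentLaurent k α α₁ α₂ j u)
      (-α * deformedMomentLaurent k α α₁ α₂ j t) t) := by
  have hk0 : k ≠ 0 := by omega
  have hsign : ∀ x : ℝ, x / (k * α) = α * x / (k * α ^ 2) := fun x => by
    field_simp
  have hA : α₁ / (k * α) < 0 := by
    rw [hsign]; exact div_neg_of_neg_of_pos hαα₁ (by positivity)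
  have hB : 0 < α₂ / (k * α) := by
    rw [hsign]; exact div_pos hαα₂ (by positivity)
  have hstat : ∀ (j : ℤ) (t : ℝ), HasDerivAt (fun u => deformedMomentLaurent k α α₁ α₂ j u)
      (-α * deformedMomentLaurent k α α₁ α₂ j t) t := fun j t => by
    simp only [deformedMomentLaurent_eq]
    exact ((((hasDerivAt_id' t).const_mul α).fun_neg.exp).mul_const _).congr_deriv (by ring)
  refine ⟨fun j t => ?_, fun j t => ?_, hstat⟩
  · simp only [deformedMomentLaurent_integrand_eq]
    refine (integrableOn_Ioi_comp_mul_left_iff _ 0 (Real.exp_pos (α * t))).2 ?_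
    rw [mul_zero]
    exact integrableOn_laurentIntegrand hk0 hA hB j
  · convert hstat j t using 1
    simp only [deformedMomentLaurent_eq]
    have hα₁ : α * (k * (α₁ / (k * α))) = α₁ := by field_simp
    have hα₂ : α * (k * (α₂ / (k * α))) = α₂ := by field_simp
    linear_combination (Real.exp (-(α * t)) * α) * laurentIntegral_recurrence hk0 hA hB j
      - Real.exp (-(α * t)) * laurentIntegral k _ _ (j + k) * hα₁
      - Real.exp (-(α * t)) * laurentIntegral k _ _ (j - k) * hα₂
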